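/- Let {(u_i, v_i)}_{i=1}^{m} be a sequence of edge insertions into an initially empty forest, where each insertion joins two distinct trees. Then ∑_{i=1}^{m} min{deg_{i−1}(u_i), deg_{i−1}(v_i)} ≤ m, where deg_{i−1} denotes the degree in the forest just before the i-th insertion. -/

import Mathlib

/-!
Let `S F` be the sum, over the connected components of `F`, of the largest degree in the
component (the paper's potential is `|E(F)| - S F`). Joining two components by an edge `uv`
raises degrees by at most one, so the merged component has largest degree at most
`max M_u M_v + 1`, where `M_u ≥ deg u` and `M_v ≥ deg v` are the largest degrees of the two
old components; all other components are unchanged. Hence each insertion lowers `S` by at least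
`min (deg u) (deg v) - 1`, and since `S ⊥ = 0 ≤ S`, the sum of these minima is at most `m`.
-/

open Finset

namespace SimpleGraph

variable {V : Type*}

theorem Reachable.sup_edge_cases {G : SimpleGraph V} {u v x y : V}
    (h : (G ⊔ edge u v).Reachable x y) :
    G.Reachable x y ∨ G.Reachable x u ∨ G.Reachable x v := by
  obtain ⟨p⟩ := h
  induction p with
  | nil => exact .inl .rfl
  | cons hadj _ ih =>
    rcases hadj with hG | hE
    · exact ih.imp hG.reachable.trans (Or.imp hG.reachable.trans hG.reachable.trans)
    · obtain ⟨⟨rfl, -⟩ | ⟨rfl, -⟩, -⟩ := (edge_adj ..).1 hE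
      · exact .inr (.inl .rfl)
      · exact .inr (.inr .rfl)

lemma reachable_sup_edge (G : SimpleGraph V) (u v : V) : (G ⊔ edge u v).Reachable u v := by
  by_cases h : u = v
  · exact h ▸ .rfl
  · exact Adj.reachable (Or.inr ((edge_adj ..).2 ⟨.inl ⟨rfl, rfl⟩, h⟩))

lemma neighborSet_edge_subset [DecidableEq V] (u v w : V) :
    (edge u v).neighborSet w ⊆ {if w = u then v else u} := by
  intro x hx
  rw [mem_neighborSet, edge_adj] at hx
  aesop

lemma neighborSet_edge_of_ne {u v w : V} (hu : w ≠ u) (hv : w ≠ v) :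
    (edge u v).neighborSet w = ∅ := by
  ext x
  simp [edge_adj, hu, hv]

section Degree

variable (G : SimpleGraph V) (u v : V) {w : V} [Fintype (G.neighborSet w)]

lemma degree_eq_ncard_neighborSet : G.degree w = (G.neighborSet w).ncard := by
  rw [← card_neighborSet_eq_degree, Set.fintypeCard_eq_ncard]

variable [Fintype ((G ⊔ edge u v).neighborSet w)]

lemma degree_sup_edge_le : (G ⊔ edge u v).degree w ≤ G.degree w + 1 := by
  classical
  rw [degree_eq_ncard_neighborSet, degree_eq_ncard_neighborSet, neighborSet_sup]
  calc _ ≤ (G.neighborSet w).ncard + ((edge u v).neighborSet w).ncard := Set.ncard_union_le _ _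
    _ ≤ _ := by
      gcongr
      exact (Set.ncard_le_ncard (neighborSet_edge_subset u v w)).trans (Set.ncard_singleton _).le

variable {u v} in
lemma degree_sup_edge_of_ne (hu : w ≠ u) (hv : w ≠ v) :
    (G ⊔ edge u v).degree w = G.degree w := by
  rw [degree_eq_ncard_neighborSet, degree_eq_ncard_neighborSet, neighborSet_sup,
    neighborSet_edge_of_ne hu hv, Set.union_empty]

end Degree

section ComponentMaxDegree

variable [Fintype V] [DecidableEq V] (G : SimpleGraph V) [DecidableRel G.Adj]

def componentMaxDegree (c : G.ConnectedComponent) : ℕ :=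
  ({w | w ∈ c.supp} : Finset V).sup fun w ↦ G.degree w

def sumComponentMaxDegree : ℕ := ∑ c, G.componentMaxDegree c

variable {G}

lemma componentMaxDegree_le_iff {c : G.ConnectedComponent} {b : ℕ} :
    G.componentMaxDegree c ≤ b ↔ ∀ w, G.connectedComponentMk w = c → G.degree w ≤ b := by
  simp [componentMaxDegree]

lemma degree_le_componentMaxDegree (w : V) :
    G.degree w ≤ G.componentMaxDegree (G.connectedComponentMk w) :=
  componentMaxDegree_le_iff.1 le_rfl w rfl

@[simp]
lemma sumComponentMaxDegree_bot [DecidableRel (⊥ : SimpleGraph V).Adj] :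
    (⊥ : SimpleGraph V).sumComponentMaxDegree = 0 :=
  sum_eq_zero fun _ _ ↦ Nat.le_zero.1 <| componentMaxDegree_le_iff.2 fun w _ ↦ by simp

end ComponentMaxDegree

section SupEdge

variable [Fintype V] [DecidableEq V] {G : SimpleGraph V} [DecidableRel G.Adj] {u v : V}
  [DecidableRel (G ⊔ edge u v).Adj]

lemma componentMaxDegree_sup_edge_le :
    (G ⊔ edge u v).componentMaxDegree ((G ⊔ edge u v).connectedComponentMk u) ≤
      max (G.componentMaxDegree (G.connectedComponentMk u))
        (G.componentMaxDegree (G.connectedComponentMk v)) + 1 := by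
  refine componentMaxDegree_le_iff.2 fun x hx ↦ (degree_sup_edge_le G u v).trans ?_
  gcongr
  obtain h | h : G.Reachable x u ∨ G.Reachable x v := by
    rcases (ConnectedComponent.eq.1 hx).sup_edge_cases with h | h | h <;> tauto
  · exact (degree_le_componentMaxDegree x).trans (ConnectedComponent.eq.2 h ▸ le_max_left _ _)
  · exact (degree_le_componentMaxDegree x).trans (ConnectedComponent.eq.2 h ▸ le_max_right _ _)

lemma componentMaxDegree_sup_edge_of_not_reachable {w : V}
    (hw : ¬(G ⊔ edge u v).Reachable w u) :
    (G ⊔ edge u v).componentMaxDegree ((G ⊔ edge u v).connectedComponentMk w) ≤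
      G.componentMaxDegree (G.connectedComponentMk w) := by
  refine componentMaxDegree_le_iff.2 fun x hx ↦ ?_
  have hxw := ConnectedComponent.eq.1 hx
  have hxu : ¬(G ⊔ edge u v).Reachable x u := fun h ↦ hw (hxw.symm.trans h)
  have hxv : ¬(G ⊔ edge u v).Reachable x v :=
    fun h ↦ hxu (h.trans (reachable_sup_edge G u v).symm)
  have hGxw : G.Reachable x w := by
    rcases hxw.sup_edge_cases with h | h | h
    · exact h
    · exact absurd (h.mono le_sup_left) hxu
    · exact absurd (h.mono le_sup_left) hxv
  rw [degree_sup_edge_of_ne G (by rintro rfl; exact hxu .rfl) (by rintro rfl; exact hxv .rfl)]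
  exact (degree_le_componentMaxDegree x).trans_eq (by rw [ConnectedComponent.eq.2 hGxw])

end SupEdge

theorem sumComponentMaxDegree_add_min_degree_le [Fintype V] [DecidableEq V]
    {G G' : SimpleGraph V} [DecidableRel G.Adj] [DecidableRel G'.Adj] {u v : V}
    (hG' : G' = G ⊔ edge u v) (huv : ¬G.Reachable u v) :
    G'.sumComponentMaxDegree + min (G.degree u) (G.degree v) ≤ G.sumComponentMaxDegree + 1 := by
  classical
  subst hG'
  let φ : G.ConnectedComponent → (G ⊔ edge u v).ConnectedComponent :=
    ConnectedComponent.map (Hom.ofLE le_sup_left)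
  let fiberSum (c' : (G ⊔ edge u v).ConnectedComponent) : ℕ :=
    ∑ c with φ c = c', G.componentMaxDegree c
  let c₀ := (G ⊔ edge u v).connectedComponentMk u
  have merged : (G ⊔ edge u v).componentMaxDegree c₀ + min (G.degree u) (G.degree v) ≤
      fiberSum c₀ + 1 := by
    have hpair : G.componentMaxDegree (G.connectedComponentMk u) +
        G.componentMaxDegree (G.connectedComponentMk v) ≤ fiberSum c₀ := by
      rw [← sum_pair (mt ConnectedComponent.eq.1 huv)]
      refine sum_le_sum_of_subset ?_
      simp [insert_subset_iff, φ, c₀, (reachable_sup_edge G u v).symm]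
    have hmerge : (G ⊔ edge u v).componentMaxDegree c₀ ≤ _ := componentMaxDegree_sup_edge_le
    have hu := degree_le_componentMaxDegree (G := G) u
    have hv := degree_le_componentMaxDegree (G := G) v
    omega
  have other (c' : (G ⊔ edge u v).ConnectedComponent) (hc' : c' ≠ c₀) :
      (G ⊔ edge u v).componentMaxDegree c' ≤ fiberSum c' := by
    induction c' using ConnectedComponent.ind with | h w => ?_
    exact (componentMaxDegree_sup_edge_of_not_reachable (mt ConnectedComponent.eq.2 hc')).trans
      (single_le_sum (fun _ _ ↦ Nat.zero_le _) (by simp [φ]))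
  calc (G ⊔ edge u v).sumComponentMaxDegree + min (G.degree u) (G.degree v)
      = ((G ⊔ edge u v).componentMaxDegree c₀ + min (G.degree u) (G.degree v)) +
          ∑ c' ∈ univ.erase c₀, (G ⊔ edge u v).componentMaxDegree c' := by
        rw [sumComponentMaxDegree, ← add_sum_erase _ _ (mem_univ c₀)]; ring
    _ ≤ (fiberSum c₀ + 1) + ∑ c' ∈ univ.erase c₀, fiberSum c' :=
        add_le_add merged (sum_le_sum fun c' hc' ↦ other c' (ne_of_mem_erase hc'))
    _ = G.sumComponentMaxDegree + 1 := by
        rw [sumComponentMaxDegree, ← sum_fiberwise univ φ, ← add_sum_erase _ _ (mem_univ c₀)]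
        ring

end SimpleGraph

open SimpleGraph in
/-- For m edge insertions into an initially empty forest, each joining
two distinct trees, the sum of the smaller endpoint degrees (just before each insertion)
is at most m. -/
theorem stmt12 {V : Type*} [Fintype V] [DecidableEq V] (m : ℕ)
    (F : ℕ → SimpleGraph V) [∀ i, DecidableRel (F i).Adj]
    (u v : ℕ → V)
    (h0 : F 0 = ⊥)
    (hstep : ∀ i < m, F (i + 1) = F i ⊔ SimpleGraph.fromEdgeSet {s(u (i + 1), v (i + 1))})
    (hsep : ∀ i < m, ¬ (F i).Reachable (u (i + 1)) (v (i + 1))) :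
    ∑ i ∈ Finset.range m, min ((F i).degree (u (i + 1))) ((F i).degree (v (i + 1))) ≤ m := by
  have potential : ∀ k ≤ m, ∑ i ∈ range k, min ((F i).degree (u (i + 1)))
      ((F i).degree (v (i + 1))) + (F k).sumComponentMaxDegree ≤ k := by
    intro k hk
    induction k with
    | zero => simp [h0]
    | succ k ih =>
      have hinsert := sumComponentMaxDegree_add_min_degree_le (hstep k hk) (hsep k hk)
      have hprev := ih (by omega)
      rw [sum_range_succ]
      omega
  exact le_of_add_le_left (potential m le_rfl)
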